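/- arXiv:2405.07787 — 6 statements merged into one kernel-verified Lean document; each statement's English description precedes it below -/
import Mathlib

section
/- If x and y are nonnegative real vectors of length n, each with nonincreasing components, and x is majorized by y, then y can be obtained from x by successively applying a finite number of A-transforms. -/
open Finset Matrix

/-- Prefix sum of the first `k` components. -/
def psum {n : ℕ} (x : Fin n → ℝ) (k : ℕ) : ℝ :=
  ∑ i ∈ Finset.filter (fun i : Fin n => (i : ℕ) < k) Finset.univ, x i

/-- `x` is majorized by `y` (both assumed sorted nonincreasingly). -/
def Maj {n : ℕ} (x y : Fin n → ℝ) : Prop :=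
  (∀ k, k < n → psum x k ≤ psum y k) ∧ (∑ i, x i) = ∑ i, y i

/-- An A-transform: for `i < j` and `λ ∈ [0,1]`, replace `x i` by `x i + λ * x j`
and `x j` by `(1 - λ) * x j`. -/
def ATrans {n : ℕ} (x x' : Fin n → ℝ) : Prop :=
  ∃ (i j : Fin n) (lam : ℝ), i < j ∧ 0 ≤ lam ∧ lam ≤ 1 ∧
    x' = Function.update (Function.update x i (x i + lam * x j)) j ((1 - lam) * x j)

/-- A B-transform: for `i < j` and `λ ∈ [0,1]`, replace `y i` by `(1 - λ) * y i`
and `y j` by `y j + λ * y i`. -/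
def BTrans {n : ℕ} (y y' : Fin n → ℝ) : Prop :=
  ∃ (i j : Fin n) (lam : ℝ), i < j ∧ 0 ≤ lam ∧ lam ≤ 1 ∧
    y' = Function.update (Function.update y i ((1 - lam) * y i)) j (y j + lam * y i)

/-- Lower triangular row-stochastic matrix. -/
def LowerRS {n : ℕ} (L : Matrix (Fin n) (Fin n) ℝ) : Prop :=
  (∀ i j, 0 ≤ L i j) ∧ (∀ i j : Fin n, i < j → L i j = 0) ∧ (∀ i, ∑ j, L i j = 1)

/-- Upper triangular row-stochastic matrix. -/
def UpperRS {n : ℕ} (U : Matrix (Fin n) (Fin n) ℝ) : Prop :=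
  (∀ i j, 0 ≤ U i j) ∧ (∀ i j : Fin n, j < i → U i j = 0) ∧ (∀ i, ∑ j, U i j = 1)

lemma psum_sub {n : ℕ} (x y : Fin n → ℝ) (k : ℕ) :
    psum y k - psum x k
      = ∑ m ∈ Finset.filter (fun m : Fin n => (m : ℕ) < k) Finset.univ, (y m - x m) := by
  simp [psum, Finset.sum_sub_distrib]

lemma psum_top {n : ℕ} (x : Fin n → ℝ) : psum x n = ∑ i, x i := by
  unfold psum
  congr 1
  ext m
  simp [m.isLt]

lemma maj_le {n : ℕ} {x y : Fin n → ℝ} (h : Maj x y) : ∀ k ≤ n, psum x k ≤ psum y k := by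
  intro k hk
  rcases lt_or_eq_of_le hk with h' | h'
  · exact h.1 k h'
  · subst h'
    rw [psum_top, psum_top, h.2]

lemma key_step {n : ℕ} (y : Fin n → ℝ) (hy0 : ∀ i, 0 ≤ y i) :
    ∀ N (x : Fin n → ℝ),
      (Finset.univ.filter (fun i => x i ≠ y i)).card ≤ N →
      Maj x y → Relation.ReflTransGen ATrans x y := by
  intro N
  induction N with
  | zero =>
    intro x hcard hmaj
    have hx : x = y := by
      funext m
      by_contra hm
      have hmem : m ∈ Finset.univ.filter (fun i => x i ≠ y i) := by
        simp [hm]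
      have := Finset.card_pos.mpr ⟨m, hmem⟩
      omega
    subst hx
    exact Relation.ReflTransGen.refl
  | succ N ih =>
    intro x hcard hmaj
    by_cases hxy : x = y
    · subst hxy; exact Relation.ReflTransGen.refl
    · -- The set of differing indices
      set S : Finset (Fin n) := Finset.univ.filter (fun i => x i ≠ y i) with hS
      have hSne : S.Nonempty := by
        rcases Function.ne_iff.mp hxy with ⟨m, hm⟩
        exact ⟨m, by simp [hS, hm]⟩
      set i : Fin n := S.min' hSne with hi
      have hiS : i ∈ S := S.min'_mem hSne
      have hixy : x i ≠ y i := by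
        have := Finset.mem_filter.mp hiS
        exact this.2
      have hmin : ∀ m : Fin n, m < i → x m = y m := by
        intro m hm
        by_contra hmne
        have hmS : m ∈ S := by simp [hS, hmne]
        exact absurd (S.min'_le m hmS) (not_le.mpr hm)
      -- x i < y i
      have hik : (i : ℕ) + 1 ≤ n := i.isLt
      have hdiff : psum y ((i : ℕ) + 1) - psum x ((i : ℕ) + 1) = y i - x i := by
        rw [psum_sub]
        apply Finset.sum_eq_single_of_mem
        · simp
        · intro b hb hbne
          have hb' : (b : ℕ) < (i : ℕ) + 1 := (Finset.mem_filter.mp hb).2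
          have hbi : b < i := by
            have : (b : ℕ) ≠ (i : ℕ) := fun h => hbne (Fin.ext h)
            exact Fin.lt_def.mpr (by omega)
          rw [hmin b hbi]
          ring
      have hxiyi : x i < y i := by
        have h1 := maj_le hmaj ((i : ℕ) + 1) hik
        have h2 : 0 ≤ y i - x i := by rw [← hdiff]; linarith
        rcases lt_or_eq_of_le (by linarith : x i ≤ y i) with h | h
        · exact h
        · exact absurd h hixy
      -- find j : smallest index > i with y j < x j
      set T : Finset (Fin n) := Finset.univ.filter (fun m => i < m ∧ y m < x m) with hT
      have hTne : T.Nonempty := by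
        by_contra hTe
        have hall : ∀ m : Fin n, i < m → x m ≤ y m := by
          intro m hm
          by_contra hmm
          exact hTe ⟨m, by simp [hT, hm, lt_of_not_ge hmm]⟩
        have hpos : (0 : ℝ) < ∑ m : Fin n, (y m - x m) := by
          apply Finset.sum_pos'
          · intro m _
            rcases lt_trichotomy m i with h | h | h
            · rw [hmin m h]; linarith
            · subst h; linarith
            · have := hall m h; linarith
          · exact ⟨i, Finset.mem_univ i, by linarith⟩
        have hzero : ∑ m : Fin n, (y m - x m) = 0 := by
          rw [Finset.sum_sub_distrib, hmaj.2]; ring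
        linarith
      set j : Fin n := T.min' hTne with hj
      have hjT : j ∈ T := T.min'_mem hTne
      have hij : i < j := (Finset.mem_filter.mp hjT).2.1
      have hji : y j < x j := (Finset.mem_filter.mp hjT).2.2
      have hTmin : ∀ m : Fin n, i < m → m < j → x m ≤ y m := by
        intro m him hmj
        by_contra hmm
        have hmT : m ∈ T := by simp [hT, him, lt_of_not_ge hmm]
        exact absurd (T.min'_le m hmT) (not_le.mpr hmj)
      have hine : i ≠ j := ne_of_lt hij
      -- the transfer amount
      set δ : ℝ := min (y i - x i) (x j - y j) with hδdef
      have hδpos : 0 < δ := lt_min (by linarith) (by linarith)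
      have hxjpos : 0 < x j := lt_of_le_of_lt (hy0 j) hji
      set lam : ℝ := δ / x j with hlamdef
      have hlam0 : 0 ≤ lam := div_nonneg (le_of_lt hδpos) (le_of_lt hxjpos)
      have hδle : δ ≤ x j - y j := min_le_right _ _
      have hδlei : δ ≤ y i - x i := min_le_left _ _
      have hlam1 : lam ≤ 1 := by
        rw [hlamdef, div_le_one hxjpos]
        have := hy0 j
        linarith
      have hlamxj : lam * x j = δ := div_mul_cancel₀ δ (ne_of_gt hxjpos)
      -- new vector
      set x' : Fin n → ℝ := fun m => if m = i then x i + δ else if m = j then x j - δ else x m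
        with hx'def
      have hx'i : x' i = x i + δ := by simp [hx'def]
      have hx'j : x' j = x j - δ := by simp [hx'def, hine.symm]
      have hx'o : ∀ m : Fin n, m ≠ i → m ≠ j → x' m = x m := by
        intro m h1 h2
        simp [hx'def, h1, h2]
      have hA : ATrans x x' := by
        refine ⟨i, j, lam, hij, hlam0, hlam1, ?_⟩
        funext m
        rcases eq_or_ne m j with rfl | hmj
        · rw [Function.update_self, hx'j, sub_mul, one_mul, hlamxj]
        · rw [Function.update_of_ne hmj]
          rcases eq_or_ne m i with rfl | hmi
          · rw [Function.update_self, hx'i, hlamxj]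
          · rw [Function.update_of_ne hmi, hx'o m hmi hmj]
      -- pointwise decomposition
      have hx'm : ∀ m : Fin n,
          x' m = x m + ((if m = i then δ else 0) + (if m = j then -δ else 0)) := by
        intro m
        rcases eq_or_ne m i with rfl | hmi
        · simp [hx'i, hine]
        · rcases eq_or_ne m j with rfl | hmj
          · simp [hx'j, hmi]; ring
          · simp [hx'o m hmi hmj, hmi, hmj]
      -- sums
      have hsum_ind : ∀ s : Finset (Fin n),
          ∑ m ∈ s, ((if m = i then δ else 0) + (if m = j then -δ else 0))
            = (if i ∈ s then δ else 0) + (if j ∈ s then -δ else 0) := by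
        intro s
        rw [Finset.sum_add_distrib, Finset.sum_ite_eq' s i (fun _ => δ),
          Finset.sum_ite_eq' s j (fun _ => -δ)]
      have hsum' : ∑ m : Fin n, x' m = ∑ m : Fin n, x m := by
        calc ∑ m : Fin n, x' m
            = ∑ m : Fin n, (x m + ((if m = i then δ else 0) + (if m = j then -δ else 0))) := by
              exact Finset.sum_congr rfl (fun m _ => hx'm m)
          _ = ∑ m : Fin n, x m := by
              rw [Finset.sum_add_distrib, hsum_ind]
              simp
      have hpsum' : ∀ k : ℕ,
          psum x' k = psum x k + ((if (i : ℕ) < k then δ else 0) +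
            (if (j : ℕ) < k then -δ else 0)) := by
        intro k
        unfold psum
        rw [Finset.sum_congr rfl (fun m _ => hx'm m), Finset.sum_add_distrib, hsum_ind]
        congr 2
        · simp
        · simp
      -- majorization preserved
      have hmaj' : Maj x' y := by
        constructor
        · intro k hk
          rw [hpsum' k]
          by_cases hik' : (i : ℕ) < k
          · by_cases hjk' : (j : ℕ) < k
            · simp only [if_pos hik', if_pos hjk']
              have := hmaj.1 k hk
              linarith
            · simp only [if_pos hik', if_neg hjk']
              -- need psum x k + δ ≤ psum y k
              have hkey : y i - x i ≤ psum y k - psum x k := by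
                rw [psum_sub]
                refine Finset.single_le_sum (f := fun m => y m - x m) ?_ ?_
                · intro m hm
                  show 0 ≤ y m - x m
                  have hmk : (m : ℕ) < k := (Finset.mem_filter.mp hm).2
                  rcases lt_trichotomy m i with h | h | h
                  · rw [hmin m h]; linarith
                  · subst h; linarith
                  · have hmj : m < j := Fin.lt_def.mpr (by omega)
                    have := hTmin m h hmj
                    linarith
                · exact Finset.mem_filter.mpr ⟨Finset.mem_univ i, hik'⟩
              linarith
          · have hjk' : ¬ (j : ℕ) < k := by
              intro h
              have := Fin.lt_def.mp hij
              omega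
            simp only [if_neg hik', if_neg hjk']
            have := hmaj.1 k hk
            linarith
        · rw [hsum', hmaj.2]
      -- cardinality decreases
      have hjS : j ∈ S := by simp [hS, ne_of_gt hji]
      have hsub : ∃ w ∈ S, ∀ m : Fin n, x' m ≠ y m → (x m ≠ y m ∧ m ≠ w) := by
        rcases le_total (y i - x i) (x j - y j) with hc | hc
        · refine ⟨i, hiS, fun m hm => ?_⟩
          have hδeq : δ = y i - x i := min_eq_left hc
          have hmne : m ≠ i := by
            rintro rfl
            rw [hx'i, hδeq] at hm
            exact hm (by ring)
          refine ⟨?_, hmne⟩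
          rcases eq_or_ne m j with rfl | hmj
          · exact ne_of_gt hji
          · rwa [hx'o m hmne hmj] at hm
        · refine ⟨j, hjS, fun m hm => ?_⟩
          have hδeq : δ = x j - y j := min_eq_right hc
          have hmne : m ≠ j := by
            rintro rfl
            rw [hx'j, hδeq] at hm
            exact hm (by ring)
          refine ⟨?_, hmne⟩
          rcases eq_or_ne m i with rfl | hmi
          · exact ne_of_lt hxiyi
          · rwa [hx'o m hmi hmne] at hm
      rcases hsub with ⟨w, hwS, hsub⟩
      have hcard' : (Finset.univ.filter (fun m => x' m ≠ y m)).card ≤ N := by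
        have hss : Finset.univ.filter (fun m => x' m ≠ y m) ⊆ S.erase w := by
          intro m hm
          have hm' := (Finset.mem_filter.mp hm).2
          rcases hsub m hm' with ⟨h1, h2⟩
          exact Finset.mem_erase.mpr ⟨h2, by simp [hS, h1]⟩
        have h1 := Finset.card_le_card hss
        have h2 := Finset.card_erase_of_mem hwS
        have h3 : 1 ≤ S.card := Finset.card_pos.mpr ⟨w, hwS⟩
        omega
      exact Relation.ReflTransGen.head hA (ih x' hcard' hmaj')

theorem stmt0 {n : ℕ} (x y : Fin n → ℝ)
    (hx0 : ∀ i, 0 ≤ x i) (hy0 : ∀ i, 0 ≤ y i)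
    (hxs : Antitone x) (hys : Antitone y)
    (hmaj : Maj x y) :
    Relation.ReflTransGen ATrans x y := by
  exact key_step y hy0 (Finset.univ.filter (fun i => x i ≠ y i)).card x le_rfl hmaj
end

section
/- If x and y are nonnegative real vectors of length n with nonincreasing components and y can be obtained from x by successive applications of A-transforms, then x is majorized by y. -/
open Finset Matrix

theorem stmt1 {n : ℕ} (x y : Fin n → ℝ)
    (hx0 : ∀ i, 0 ≤ x i) (hy0 : ∀ i, 0 ≤ y i)
    (hxs : Antitone x) (hys : Antitone y)
    (h : Relation.ReflTransGen ATrans x y) :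
    Maj x y := by
  suffices H : (∀ i, 0 ≤ y i) ∧ (∀ k, psum x k ≤ psum y k) ∧ (∑ i, x i) = ∑ i, y i by
    exact ⟨fun k _ => H.2.1 k, H.2.2⟩
  clear hy0 hys hxs
  induction h with
  | refl => exact ⟨hx0, fun k => le_refl _, rfl⟩
  | @tail b c hab hbc ih =>
    obtain ⟨hz0, hle, hsum⟩ := ih
    obtain ⟨i, j, lam, hij, hl0, hl1, heq⟩ := hbc
    have hne : i ≠ j := ne_of_lt hij
    have hlz : 0 ≤ lam * b j := mul_nonneg hl0 (hz0 j)
    have hc : ∀ l, c l = b l + (if l = i then lam * b j else 0)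
        - (if l = j then lam * b j else 0) := by
      intro l
      subst heq
      rcases eq_or_ne l j with rfl | hlj
      · simp [Function.update_apply, hne.symm]; ring
      · rcases eq_or_ne l i with rfl | hli
        · simp [Function.update_apply, hne, hlj]
        · simp [Function.update_apply, hli, hlj]
    have key : ∀ s : Finset (Fin n), ∑ l ∈ s, c l
        = (∑ l ∈ s, b l) + (if i ∈ s then lam * b j else 0)
          - (if j ∈ s then lam * b j else 0) := by
      intro s
      simp only [hc, Finset.sum_sub_distrib, Finset.sum_add_distrib,
        Finset.sum_ite_eq' s]
    refine ⟨?_, ?_, ?_⟩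
    · intro l
      rcases eq_or_ne l j with rfl | hlj
      · subst heq
        simp only [Function.update_self]
        exact mul_nonneg (by linarith) (hz0 l)
      · rcases eq_or_ne l i with rfl | hli
        · subst heq
          simp only [Function.update_of_ne hlj, Function.update_self]
          exact add_nonneg (hz0 l) hlz
        · subst heq
          simp only [Function.update_of_ne hlj, Function.update_of_ne hli]
          exact hz0 l
    · intro k
      refine le_trans (hle k) ?_
      unfold psum
      rw [key]
      by_cases hj : j ∈ Finset.filter (fun l : Fin n => (l : ℕ) < k) Finset.univ
      · have hi : i ∈ Finset.filter (fun l : Fin n => (l : ℕ) < k) Finset.univ := by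
          simp only [Finset.mem_filter, Finset.mem_univ, true_and] at hj ⊢
          exact lt_trans (Fin.lt_iff_val_lt_val.mp hij) hj
        simp [hi, hj]
      · split <;> simp [hj] <;> linarith
    · rw [hsum, key]; simp
end

section
/- For nonnegative vectors x, y of length n with nonincreasing components, x is majorized by y if and only if there exists a lower triangular row-stochastic matrix L such that y = xL (i.e., y_i = Σ_{j≥i} x_j L_{ji}). -/
open Finset Matrix

/-!
With `S = psum x` and `T = psum y`, the intervals `[S i, S (i+1)]` and `[T j, T (j+1)]` both tile
`[0, S n] = [0, T n]`, so the lengths `m i j` of their overlaps form a nonnegative matrix with row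
sums `x` and column sums `y`. If `S ≤ T` then `m i j = 0` for `i < j`, because
`S (i+1) ≤ S j ≤ T j`; dividing row `i` of `m` by `x i` gives `L`. Conversely, for lower triangular
stochastic `L`, the first `k` coordinates of `x L` receive all the mass of the first `k` coordinates
of `x`, and possibly more.
-/

section PrefixSum

variable {n : ℕ} (x : Fin n → ℝ)

lemma psum_zero : psum x 0 = 0 := by
  simp [psum]

lemma psum_succ {k : ℕ} (hk : k < n) : psum x (k + 1) = psum x k + x ⟨k, hk⟩ := by
  have : filter (fun i : Fin n => (i : ℕ) < k + 1) univ =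
      insert ⟨k, hk⟩ (filter (fun i : Fin n => (i : ℕ) < k) univ) := by
    ext i
    simp only [mem_filter, mem_univ, true_and, mem_insert, Fin.ext_iff]
    omega
  rw [psum, this, sum_insert (by simp), add_comm, psum]

lemma psum_of_le {k : ℕ} (hk : n ≤ k) : psum x k = ∑ i, x i := by
  rw [psum, filter_true_of_mem fun i _ => i.isLt.trans_le hk]

lemma monotone_psum (hx : ∀ i, 0 ≤ x i) : Monotone (psum x) := fun k l hkl =>
  sum_le_sum_of_subset_of_nonneg (fun i => by simp only [mem_filter, mem_univ, true_and]; omega)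
    fun i _ _ => hx i

lemma psum_eq_sum_of_eq_zero {k : ℕ} (h : ∀ j : Fin n, k ≤ j → x j = 0) :
    psum x k = ∑ j, x j :=
  sum_subset (filter_subset _ _) fun j _ hj => h j (by simpa using hj)

lemma psum_vecMul (L : Matrix (Fin n) (Fin n) ℝ) (k : ℕ) :
    psum (vecMul x L) k = ∑ i, x i * psum (L i) k := by
  simp only [psum, vecMul, dotProduct, mul_sum]
  exact sum_comm

end PrefixSum

/-- The length of `[a, b] ∩ [s, t]`. -/
def overlap (a b s t : ℝ) : ℝ := max 0 (min b t - max a s)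

lemma overlap_nonneg (a b s t : ℝ) : 0 ≤ overlap a b s t := le_max_left _ _

lemma overlap_comm (a b s t : ℝ) : overlap a b s t = overlap s t a b := by
  rw [overlap, overlap, min_comm, max_comm a]

lemma overlap_eq_zero_of_le {a b s t : ℝ} (h : b ≤ s) : overlap a b s t = 0 :=
  max_eq_left (by linarith [min_le_left b t, le_max_right a s])

lemma overlap_eq_sub {a b s t : ℝ} (hab : a ≤ b) (hst : s ≤ t) :
    overlap a b s t = min b (max a t) - min b (max a s) := by
  simp only [overlap, min_def, max_def]
  split_ifs <;> linarith

lemma sum_overlap_eq_sub {T : ℕ → ℝ} (hT : Monotone T) {a b : ℝ} (hab : a ≤ b) {n : ℕ}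
    (h₀ : T 0 ≤ a) (hn : b ≤ T n) :
    ∑ j ∈ range n, overlap a b (T j) (T (j + 1)) = b - a := by
  rw [sum_congr rfl fun j _ => overlap_eq_sub hab (hT j.le_succ),
    sum_range_sub (fun j => min b (max a (T j))), max_eq_right (hab.trans hn), min_eq_left hn,
    max_eq_left h₀, min_eq_right hab]

section Majorization

variable {n : ℕ}

lemma exists_lowerRS_mul_eq {M : Matrix (Fin n) (Fin n) ℝ} (hM : ∀ i j, 0 ≤ M i j)
    (hlow : ∀ i j : Fin n, i < j → M i j = 0) :
    ∃ L : Matrix (Fin n) (Fin n) ℝ, LowerRS L ∧ ∀ i j, (∑ k, M i k) * L i j = M i j := by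
  set r : Fin n → ℝ := fun i => ∑ k, M i k
  have hr : ∀ i, 0 ≤ r i := fun i => sum_nonneg fun k _ => hM i k
  have hM_zero : ∀ i, r i = 0 → ∀ j, M i j = 0 := fun i h j =>
    (sum_eq_zero_iff_of_nonneg fun k _ => hM i k).1 h j (mem_univ j)
  refine ⟨fun i j => if r i = 0 then if i = j then 1 else 0 else M i j / r i,
    ⟨fun i j => ?_, fun i j hij => ?_, fun i => ?_⟩, fun i j => ?_⟩ <;>
    by_cases h : r i = 0 <;> simp only [h, if_true, if_false]
  · split_ifs <;> norm_num
  · exact div_nonneg (hM i j) (hr i)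
  · exact if_neg hij.ne
  · rw [hlow i j hij, zero_div]
  · simp
  · rw [← sum_div, div_self h]
  · rw [show ∑ k, M i k = 0 from h, zero_mul, hM_zero i h j]
  · exact mul_div_cancel₀ _ h

lemma exists_lower_coupling_of_maj {x y : Fin n → ℝ} (hx : ∀ i, 0 ≤ x i) (hy : ∀ i, 0 ≤ y i)
    (h : Maj x y) :
    ∃ M : Matrix (Fin n) (Fin n) ℝ, (∀ i j, 0 ≤ M i j) ∧ (∀ i j : Fin n, i < j → M i j = 0) ∧
      (∀ i, ∑ j, M i j = x i) ∧ ∀ j, ∑ i, M i j = y j := by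
  obtain ⟨hpre, htot⟩ := h
  set S := psum x
  set T := psum y
  have hS : Monotone S := monotone_psum x hx
  have hT : Monotone T := monotone_psum y hy
  have h₀ : T 0 = S 0 := by simp only [S, T, psum_zero]
  have hn : S n = T n := by simp only [S, T, psum_of_le _ le_rfl, htot]
  have hST : ∀ k ≤ n, S k ≤ T k := fun k hk => hk.lt_or_eq.elim (hpre k) fun hk => hk ▸ hn.le
  refine ⟨fun i j => overlap (S i) (S (i + 1)) (T j) (T (j + 1)), fun i j => overlap_nonneg _ _ _ _,
    fun i j hij => overlap_eq_zero_of_le ((hS hij).trans (hST j j.isLt.le)), fun i => ?_, fun j => ?_⟩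
  · rw [Fin.sum_univ_eq_sum_range (fun j => overlap (S i) (S (i + 1)) (T j) (T (j + 1))),
      sum_overlap_eq_sub hT (hS (Nat.le_add_right _ 1))
      (h₀ ▸ hS (Nat.zero_le _)) (hn ▸ hS i.isLt)]
    exact sub_eq_of_eq_add' (psum_succ x i.isLt)
  · simp only [overlap_comm (S _)]
    rw [Fin.sum_univ_eq_sum_range (fun i => overlap (T j) (T (j + 1)) (S i) (S (i + 1))),
      sum_overlap_eq_sub hS (hT (Nat.le_add_right _ 1))
      (h₀ ▸ hT (Nat.zero_le _)) (hn ▸ hT j.isLt)]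
    exact sub_eq_of_eq_add' (psum_succ y j.isLt)

lemma sum_vecMul_of_sum_row_eq_one {L : Matrix (Fin n) (Fin n) ℝ} (hL : ∀ i, ∑ j, L i j = 1)
    (x : Fin n → ℝ) : ∑ j, vecMul x L j = ∑ i, x i := by
  simp only [vecMul, dotProduct]
  rw [sum_comm]
  simp only [← mul_sum, hL, mul_one]

lemma maj_vecMul_of_lowerRS {x : Fin n → ℝ} (hx : ∀ i, 0 ≤ x i) {L : Matrix (Fin n) (Fin n) ℝ}
    (hL : LowerRS L) : Maj x (vecMul x L) := by
  obtain ⟨hL_nonneg, hL_lower, hL_row⟩ := hL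
  refine ⟨fun k _ => ?_, (sum_vecMul_of_sum_row_eq_one hL_row x).symm⟩
  have hrow : ∀ i : Fin n, (i : ℕ) < k → psum (L i) k = 1 := fun i hi =>
    (psum_eq_sum_of_eq_zero _ fun j hj => hL_lower i j (hi.trans_le hj)).trans (hL_row i)
  calc psum x k = ∑ i ∈ filter (fun i : Fin n => (i : ℕ) < k) univ, x i * psum (L i) k :=
        sum_congr rfl fun i hi => by rw [hrow i (mem_filter.1 hi).2, mul_one]
    _ ≤ ∑ i, x i * psum (L i) k :=
        sum_le_sum_of_subset_of_nonneg (subset_univ _) fun i _ _ =>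
          mul_nonneg (hx i) (sum_nonneg fun j _ => hL_nonneg i j)
    _ = psum (vecMul x L) k := (psum_vecMul x L k).symm

end Majorization

theorem stmt6_general {n : ℕ} (x y : Fin n → ℝ)
    (hx0 : ∀ i, 0 ≤ x i) (hy0 : ∀ i, 0 ≤ y i) :
    Maj x y ↔ ∃ L : Matrix (Fin n) (Fin n) ℝ, LowerRS L ∧ y = Matrix.vecMul x L := by
  refine ⟨fun h => ?_, fun ⟨L, hL, hy⟩ => hy ▸ maj_vecMul_of_lowerRS hx0 hL⟩
  obtain ⟨M, hM, hM_lower, hM_row, hM_col⟩ := exists_lower_coupling_of_maj hx0 hy0 h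
  obtain ⟨L, hL, hLM⟩ := exists_lowerRS_mul_eq hM hM_lower
  refine ⟨L, hL, funext fun j => ?_⟩
  simp only [vecMul, dotProduct, ← hM_row, hLM, hM_col]

theorem stmt6 {n : ℕ} (x y : Fin n → ℝ)
    (hx0 : ∀ i, 0 ≤ x i) (hy0 : ∀ i, 0 ≤ y i)
    (hxs : Antitone x) (hys : Antitone y) :
    Maj x y ↔ ∃ L : Matrix (Fin n) (Fin n) ℝ, LowerRS L ∧ y = Matrix.vecMul x L :=
  stmt6_general x y hx0 hy0
end

section
/- If there exists a lower triangular row-stochastic n×n matrix L with y = xL, where x and y are nonnegative vectors with nonincreasing components, then x ≺ y. -/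
open Finset Matrix

theorem stmt7 {n : ℕ} (x y : Fin n → ℝ) (L : Matrix (Fin n) (Fin n) ℝ)
    (hx0 : ∀ i, 0 ≤ x i) (hy0 : ∀ i, 0 ≤ y i)
    (hxs : Antitone x) (hys : Antitone y)
    (hL : LowerRS L) (h : y = Matrix.vecMul x L) :
    Maj x y := by
  obtain ⟨hpos, htri, hrow⟩ := hL
  have hy : ∀ i, y i = ∑ j, x j * L j i := by
    intro i; rw [h]; rfl
  constructor
  · intro k hk
    have key : psum y k = ∑ j, x j * ∑ i ∈ Finset.filter (fun i : Fin n => (i : ℕ) < k) Finset.univ, L j i := by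
      unfold psum
      simp_rw [hy, Finset.mul_sum]
      rw [Finset.sum_comm]
    rw [key]
    have hx : psum x k = ∑ j : Fin n, (if (j : ℕ) < k then x j else 0) := by
      unfold psum
      rw [Finset.sum_filter]
    rw [hx]
    apply Finset.sum_le_sum
    intro j _
    by_cases hjk : (j : ℕ) < k
    · simp only [hjk, if_true]
      have hc : ∑ i ∈ Finset.filter (fun i : Fin n => (i : ℕ) < k) Finset.univ, L j i
          = ∑ i, L j i := by
        rw [Finset.sum_filter]
        apply Finset.sum_congr rfl
        intro i _
        by_cases hik : (i : ℕ) < k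
        · simp [hik]
        · have : j < i := by
            have : (j : ℕ) < (i : ℕ) := lt_of_lt_of_le hjk (le_of_not_gt hik)
            exact this
          simp [hik, htri j i this]
      rw [hc, hrow j, mul_one]
    · simp only [hjk, if_false]
      exact mul_nonneg (hx0 j) (Finset.sum_nonneg fun i _ => hpos j i)
  · simp_rw [hy]
    rw [Finset.sum_comm]
    apply Finset.sum_congr rfl
    intro j _
    rw [← Finset.mul_sum, hrow j, mul_one]
end

section
/- If there exists an upper triangular row-stochastic n×n matrix U such that x = yU, where x and y are nonnegative vectors with nonincreasing components, then x ≺ y. -/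
open Finset Matrix

theorem stmt13 {n : ℕ} (x y : Fin n → ℝ) (U : Matrix (Fin n) (Fin n) ℝ)
    (hx0 : ∀ i, 0 ≤ x i) (hy0 : ∀ i, 0 ≤ y i)
    (hxs : Antitone x) (hys : Antitone y)
    (hU : UpperRS U) (h : x = Matrix.vecMul y U) :
    Maj x y := by
  obtain ⟨hUnn, hUtri, hUrow⟩ := hU
  have hx : ∀ j, x j = ∑ i, y i * U i j := by
    intro j; rw [h]; simp [Matrix.vecMul, dotProduct]
  constructor
  · intro k hk
    have key : psum x k = ∑ i ∈ Finset.filter (fun i : Fin n => (i : ℕ) < k) Finset.univ,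
        y i * ∑ j ∈ Finset.filter (fun j : Fin n => (j : ℕ) < k) Finset.univ, U i j := by
      unfold psum
      calc ∑ j ∈ Finset.filter (fun j : Fin n => (j : ℕ) < k) Finset.univ, x j
          = ∑ j ∈ Finset.filter (fun j : Fin n => (j : ℕ) < k) Finset.univ, ∑ i, y i * U i j := by
            simp_rw [hx]
        _ = ∑ i, ∑ j ∈ Finset.filter (fun j : Fin n => (j : ℕ) < k) Finset.univ, y i * U i j :=
            Finset.sum_comm
        _ = ∑ i ∈ Finset.filter (fun i : Fin n => (i : ℕ) < k) Finset.univ,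
              ∑ j ∈ Finset.filter (fun j : Fin n => (j : ℕ) < k) Finset.univ, y i * U i j := by
            symm
            refine Finset.sum_subset (Finset.subset_univ _) fun i _ hi => ?_
            have hi' : ¬ (i : ℕ) < k := by simpa using hi
            refine Finset.sum_eq_zero fun j hj => ?_
            have hjk : (j : ℕ) < k := (Finset.mem_filter.mp hj).2
            have hji : j < i := Fin.lt_def.mpr (lt_of_lt_of_le hjk (Nat.le_of_not_lt hi'))
            rw [hUtri i j hji, mul_zero]
        _ = _ := by simp_rw [Finset.mul_sum]
    rw [key]
    unfold psum
    refine Finset.sum_le_sum fun i _ => ?_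
    have h1 : ∑ j ∈ Finset.filter (fun j : Fin n => (j : ℕ) < k) Finset.univ, U i j ≤ 1 := by
      rw [← hUrow i]
      exact Finset.sum_le_sum_of_subset_of_nonneg (Finset.filter_subset _ _)
        (fun j _ _ => hUnn i j)
    calc y i * ∑ j ∈ Finset.filter (fun j : Fin n => (j : ℕ) < k) Finset.univ, U i j
        ≤ y i * 1 := mul_le_mul_of_nonneg_left h1 (hy0 i)
      _ = y i := mul_one _
  · calc ∑ j, x j = ∑ j, ∑ i, y i * U i j := by simp_rw [hx]
      _ = ∑ i, ∑ j, y i * U i j := Finset.sum_comm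
      _ = ∑ i, y i := by
          refine Finset.sum_congr rfl fun i _ => ?_
          rw [← Finset.mul_sum, hUrow i, mul_one]
end

section
/- Let x, y be probability vectors on n > 1 outcomes with nonincreasing components, x ≺ y and x ≠ y, and let U be the upper triangular row-stochastic matrix with x = yU obtained from the canonical sequence of B-transforms. Then Σ_i x_i log₂(1/(uU)_i) > log₂ n, where u = (1/n, ..., 1/n). -/
open Finset Matrix

/-- The matrix of a B-transform with indices `i < j` and coefficient `lam`. -/
def BMat {n : ℕ} (i j : Fin n) (lam : ℝ) : Matrix (Fin n) (Fin n) ℝ :=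
  fun a b =>
    if a = i then (if b = i then 1 - lam else if b = j then lam else 0)
    else (if a = b then 1 else 0)

/-- A canonical B-transform chain from `y` down to `x`:
`z 0 = y`, `z s = x`, and at each step `t < s` the index `jj t` is the largest
index where `z t` exceeds `x`, `kk t` is the smallest index above `jj t` where
`x` exceeds `z t`, and `lam t = min (z t (jj t) - x (jj t)) (x (kk t) - z t (kk t)) / z t (jj t)`,
with `z (t+1) = (z t) ⬝ᵥ BMat (jj t) (kk t) (lam t)` (row-vector times matrix). -/
structure CanonChain {n : ℕ} (x y : Fin n → ℝ) (s : ℕ)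
    (z : ℕ → Fin n → ℝ) (jj kk : ℕ → Fin n) (lam : ℕ → ℝ) : Prop where
  z_zero : z 0 = y
  z_last : z s = x
  lt : ∀ t < s, jj t < kk t
  j_big : ∀ t < s, x (jj t) < z t (jj t)
  j_largest : ∀ t < s, ∀ i : Fin n, jj t < i → z t i ≤ x i
  k_small : ∀ t < s, z t (kk t) < x (kk t)
  k_smallest : ∀ t < s, ∀ i : Fin n, jj t < i → i < kk t → x i ≤ z t i
  lam_def : ∀ t < s,
    lam t = min (z t (jj t) - x (jj t)) (x (kk t) - z t (kk t)) / z t (jj t)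
  step : ∀ t < s, z (t + 1) = Matrix.vecMul (z t) (BMat (jj t) (kk t) (lam t))

/-! With `c` the column sums of `U`, `(uU)ₖ = cₖ / n`, so the claim is `∑ xₖ log cₖ < 0`.
Every B-transform matrix is upper triangular and row-stochastic, hence so is `U`, and `x = yU`.
Since `U` only moves mass to higher indices, where the nonincreasing `x` is smaller,
`∑ xₖ cₖ ≤ 1`; with `log c ≤ c - 1` this gives `∑ xₖ log cₖ ≤ 0`. Equality would force `cₖ = 1`
on the support of `x`, which is an initial segment; column by column `U` is then the identity
there, and this forces `x = y`. -/

section UpperRS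

variable {n : ℕ} {U V : Matrix (Fin n) (Fin n) ℝ}

theorem upperRS_one : UpperRS (1 : Matrix (Fin n) (Fin n) ℝ) := by
  refine ⟨fun i j => ?_, fun i j h => one_apply_ne h.ne', fun i => ?_⟩
  · by_cases h : i = j <;> simp [one_apply, h]
  · simp [one_apply]

theorem UpperRS.mul (hU : UpperRS U) (hV : UpperRS V) : UpperRS (U * V) := by
  obtain ⟨hU0, hUt, hU1⟩ := hU
  obtain ⟨hV0, hVt, hV1⟩ := hV
  refine ⟨fun i j => ?_, fun i j hji => ?_, fun i => ?_⟩
  · rw [mul_apply]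
    exact sum_nonneg fun k _ => mul_nonneg (hU0 i k) (hV0 k j)
  · rw [mul_apply]
    refine sum_eq_zero fun k _ => ?_
    rcases lt_or_ge k i with h | h
    · rw [hUt i k h, zero_mul]
    · rw [hVt k j (hji.trans_le h), mul_zero]
  · simp only [mul_apply]
    rw [sum_comm]
    simp only [← mul_sum, hV1, mul_one, hU1]

theorem upperRS_list_prod :
    ∀ l : List (Matrix (Fin n) (Fin n) ℝ), (∀ M ∈ l, UpperRS M) → UpperRS l.prod
  | [], _ => upperRS_one
  | M :: l, h => (h M List.mem_cons_self).mul
      (upperRS_list_prod l fun N hN => h N (List.mem_cons_of_mem _ hN))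

theorem upperRS_BMat {i j : Fin n} {lam : ℝ} (hij : i < j) (h0 : 0 ≤ lam) (h1 : lam ≤ 1) :
    UpperRS (BMat i j lam) := by
  refine ⟨fun a b => ?_, fun a b hba => ?_, fun a => ?_⟩
  · unfold BMat; split_ifs <;> linarith
  · unfold BMat
    split_ifs with hai hbi hbj hab <;> first | rfl | subst_vars
    · exact absurd hba (lt_irrefl _)
    · exact absurd hba (not_lt_of_gt hij)
    · exact absurd hba (lt_irrefl _)
  · by_cases hai : a = i
    · subst hai
      have hrow : ∀ b, BMat a j lam a b =
          (if b = a then 1 - lam else 0) + if b = j then lam else 0 := by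
        intro b
        simp only [BMat, if_true]
        split_ifs with hba hbj <;> first | exact absurd (hba.symm.trans hbj) hij.ne | ring
      simp [hrow, sum_add_distrib]
    · simp [BMat, hai]

theorem UpperRS.apply_eq_zero_of_apply_self (hU : UpperRS U) {k b : Fin n} (hkk : U k k = 1)
    (hb : b ≠ k) : U k b = 0 := by
  have hrest : ∑ j ∈ univ.erase k, U k j = 0 := by
    linarith [add_sum_erase univ (U k) (mem_univ k), hU.2.2 k]
  exact (sum_eq_zero_iff_of_nonneg fun j _ => hU.1 k j).mp hrest b (mem_erase.mpr ⟨hb, mem_univ b⟩)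

theorem UpperRS.apply_eq_one_apply_of_sum_col (hU : UpperRS U) (k : Fin n)
    (hcol : ∀ a ≤ k, ∑ i, U i a = 1) (i : Fin n) : U i k = (1 : Matrix (Fin n) (Fin n) ℝ) i k := by
  induction k using WellFoundedLT.induction generalizing i with
  | ind k ih =>
    have hoff : ∀ a ≠ k, U a k = 0 := by
      intro a hak
      rcases hak.lt_or_gt with hlt | hgt
      · have haa : U a a = 1 := by
          simpa using ih a hlt (fun b hb => hcol b (hb.trans hlt.le)) a
        exact hU.apply_eq_zero_of_apply_self haa hak.symm
      · exact hU.2.1 a k hgt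
    have hkk : U k k = 1 := by
      rw [← hcol k le_rfl, ← add_sum_erase univ (U · k) (mem_univ k),
        sum_eq_zero fun a ha => hoff a (mem_erase.mp ha).1, add_zero]
    by_cases hik : i = k
    · subst hik; simp [hkk]
    · simp [hoff i hik, one_apply_ne hik]

theorem UpperRS.sum_mul_sum_col_le (hU : UpperRS U) {x : Fin n → ℝ} (hx : Antitone x) :
    ∑ k, x k * ∑ a, U a k ≤ ∑ a, x a :=
  calc ∑ k, x k * ∑ a, U a k = ∑ a, ∑ k, x k * U a k := by
        simp only [mul_sum]; exact sum_comm
    _ ≤ ∑ a, ∑ k, x a * U a k := by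
        refine sum_le_sum fun a _ => sum_le_sum fun k _ => ?_
        rcases lt_or_ge k a with h | h
        · simp [hU.2.1 a k h]
        · exact mul_le_mul_of_nonneg_right (hx h) (hU.1 a k)
    _ = ∑ a, x a := by simp only [← mul_sum, hU.2.2, mul_one]

theorem UpperRS.eq_of_eq_vecMul (hU : UpperRS U) {x y : Fin n → ℝ} (hxy : x = y ᵥ* U)
    (hx0 : ∀ i, 0 ≤ x i) (hxs : Antitone x) (hy0 : ∀ i, 0 ≤ y i) (hsum : ∑ i, x i = ∑ i, y i)
    (hcol : ∀ k, 0 < x k → ∑ a, U a k = 1) : x = y := by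
  have hpos : ∀ k, 0 < x k → x k = y k := by
    intro k hk
    have hid := hU.apply_eq_one_apply_of_sum_col k fun a hak => hcol a (hk.trans_le (hxs hak))
    rw [hxy, vecMul, dotProduct]
    simp [hid, one_apply]
  -- `y` carries all its mass on the support of `x`, so it vanishes off it.
  have hzero : ∑ i ∈ univ.filter (fun i => ¬ 0 < x i), y i = 0 := by
    have hon : ∑ i ∈ univ.filter (fun i => 0 < x i), y i = ∑ i, x i := by
      rw [sum_congr rfl fun i hi => (hpos i (mem_filter.mp hi).2).symm]
      exact sum_filter_of_ne fun i _ hi => (hx0 i).lt_of_ne' hi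
    linarith [sum_filter_add_sum_filter_not univ (fun i => 0 < x i) y]
  funext k
  by_cases hk : 0 < x k
  · exact hpos k hk
  · rw [le_antisymm (not_lt.mp hk) (hx0 k),
      (sum_eq_zero_iff_of_nonneg fun i _ => hy0 i).mp hzero k (mem_filter.mpr ⟨mem_univ k, hk⟩)]

end UpperRS

theorem vecMul_apply_le_sum_col {ι : Type*} [Fintype ι] {U : Matrix ι ι ℝ}
    (hU : ∀ i j, 0 ≤ U i j) {y : ι → ℝ} (hy0 : ∀ i, 0 ≤ y i) (hy1 : ∑ i, y i = 1) (k : ι) :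
    (y ᵥ* U) k ≤ ∑ a, U a k := by
  refine sum_le_sum fun a _ => mul_le_of_le_one_left (hU a k) ?_
  exact hy1 ▸ single_le_sum (fun i _ => hy0 i) (mem_univ a)

theorem sum_mul_log_neg {ι : Type*} [Fintype ι] {x c : ι → ℝ} (hx0 : ∀ i, 0 ≤ x i)
    (hx1 : ∑ i, x i = 1) (hc : ∀ i, 0 < x i → 0 < c i) (hxc : ∑ i, x i * c i ≤ 1)
    (hne : ∃ i, 0 < x i ∧ c i ≠ 1) : ∑ i, x i * Real.log (c i) < 0 := by
  obtain ⟨i₀, hi₀, hci₀⟩ := hne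
  have hle : ∀ i, x i * Real.log (c i) ≤ x i * (c i - 1) := by
    intro i
    rcases (hx0 i).lt_or_eq with hi | hi
    · exact mul_le_mul_of_nonneg_left (Real.log_le_sub_one_of_pos (hc i hi)) hi.le
    · simp [← hi]
  have hlt : x i₀ * Real.log (c i₀) < x i₀ * (c i₀ - 1) :=
    mul_lt_mul_of_pos_left (Real.log_lt_sub_one_of_pos (hc i₀ hi₀) hci₀) hi₀
  calc ∑ i, x i * Real.log (c i) < ∑ i, x i * (c i - 1) :=
        sum_lt_sum (fun i _ => hle i) ⟨i₀, mem_univ _, hlt⟩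
    _ = ∑ i, x i * c i - 1 := by simp only [mul_sub, mul_one, sum_sub_distrib, hx1]
    _ ≤ 0 := by linarith

namespace CanonChain

variable {n s : ℕ} {x y : Fin n → ℝ} {z : ℕ → Fin n → ℝ} {jj kk : ℕ → Fin n} {lam : ℕ → ℝ}

theorem lam_mem_Icc (h : CanonChain x y s z jj kk lam) (hx0 : ∀ i, 0 ≤ x i) {t : ℕ}
    (ht : t < s) : lam t ∈ Set.Icc 0 1 := by
  have hj := h.j_big t ht
  have hzj : 0 < z t (jj t) := (hx0 _).trans_lt hj
  have hmin : 0 ≤ min (z t (jj t) - x (jj t)) (x (kk t) - z t (kk t)) :=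
    le_min (by linarith) (by linarith [h.k_small t ht])
  rw [h.lam_def t ht]
  refine ⟨by positivity, (div_le_one hzj).mpr ?_⟩
  linarith [min_le_left (z t (jj t) - x (jj t)) (x (kk t) - z t (kk t)), hx0 (jj t)]

theorem upperRS_prod (h : CanonChain x y s z jj kk lam) (hx0 : ∀ i, 0 ≤ x i) :
    UpperRS ((List.range s).map fun t => BMat (jj t) (kk t) (lam t)).prod := by
  refine upperRS_list_prod _ fun M hM => ?_
  obtain ⟨t, ht, rfl⟩ := List.mem_map.mp hM
  have ht := List.mem_range.mp ht
  exact upperRS_BMat (h.lt t ht) (h.lam_mem_Icc hx0 ht).1 (h.lam_mem_Icc hx0 ht).2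

theorem eq_vecMul_prod (h : CanonChain x y s z jj kk lam) {t : ℕ} (ht : t ≤ s) :
    z t = y ᵥ* ((List.range t).map fun t => BMat (jj t) (kk t) (lam t)).prod := by
  induction t with
  | zero => simp [h.z_zero]
  | succ t ih =>
    rw [h.step t ht, ih (Nat.le_of_succ_le ht), vecMul_vecMul, List.range_succ, List.map_append,
      List.prod_append, List.map_singleton, List.prod_singleton]

end CanonChain

theorem stmt16_general {n : ℕ} (x y : Fin n → ℝ)
    (hx0 : ∀ i, 0 ≤ x i) (hx1 : ∑ i, x i = 1)
    (hy0 : ∀ i, 0 ≤ y i) (hy1 : ∑ i, y i = 1)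
    (hxs : Antitone x)
    (hne : x ≠ y)
    (s : ℕ) (z : ℕ → Fin n → ℝ) (jj kk : ℕ → Fin n) (lam : ℕ → ℝ)
    (hchain : CanonChain x y s z jj kk lam)
    (U : Matrix (Fin n) (Fin n) ℝ)
    (hU : U = (((List.range s).map (fun t => BMat (jj t) (kk t) (lam t))).prod)) :
    Real.logb 2 n <
      ∑ i, x i * Real.logb 2 (1 / Matrix.vecMul (fun _ : Fin n => (1 : ℝ) / n) U i) := by
  have hn : (0 : ℝ) < n := Nat.cast_pos.mpr (Nat.pos_of_ne_zero (by rintro rfl; simp at hx1))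
  have hUU : UpperRS U := hU ▸ hchain.upperRS_prod hx0
  have hxU : x = y ᵥ* U := by rw [hU, ← hchain.eq_vecMul_prod le_rfl, hchain.z_last]
  set c : Fin n → ℝ := fun k => ∑ a, U a k
  have hxc : ∀ k, x k ≤ c k := hxU ▸ vecMul_apply_le_sum_col hUU.1 hy0 hy1
  have hlog : ∑ k, x k * Real.log (c k) < 0 := by
    refine sum_mul_log_neg hx0 hx1 (fun k hk => hk.trans_le (hxc k))
      (hx1 ▸ hUU.sum_mul_sum_col_le hxs) ?_
    by_contra! hcol
    exact hne (hUU.eq_of_eq_vecMul hxU hx0 hxs hy0 (hx1.trans hy1.symm) hcol)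
  have hterm : ∀ k, x k * Real.logb 2 (1 / ((fun _ => (1 : ℝ) / n) ᵥ* U) k)
      = x k * Real.logb 2 n - x k * Real.log (c k) / Real.log 2 := by
    intro k
    rcases (hx0 k).lt_or_eq with hk | hk
    · have hck : c k ≠ 0 := (hk.trans_le (hxc k)).ne'
      have hu : ((fun _ => (1 : ℝ) / n) ᵥ* U) k = c k / n := by
        simp [vecMul, dotProduct, c, ← mul_sum, div_eq_inv_mul]
      rw [hu, one_div_div, Real.logb_div hn.ne' hck]
      unfold Real.logb
      ring
    · simp [← hk]
  rw [sum_congr rfl fun k _ => hterm k, sum_sub_distrib, ← sum_mul, hx1, one_mul, ← sum_div]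
  linarith [div_neg_of_neg_of_pos hlog (Real.log_pos one_lt_two)]

theorem stmt16 {n : ℕ} (hn : 1 < n) (x y : Fin n → ℝ)
    (hx0 : ∀ i, 0 ≤ x i) (hx1 : ∑ i, x i = 1)
    (hy0 : ∀ i, 0 ≤ y i) (hy1 : ∑ i, y i = 1)
    (hxs : Antitone x) (hys : Antitone y)
    (hmaj : Maj x y) (hne : x ≠ y)
    (s : ℕ) (z : ℕ → Fin n → ℝ) (jj kk : ℕ → Fin n) (lam : ℕ → ℝ)
    (hchain : CanonChain x y s z jj kk lam)
    (U : Matrix (Fin n) (Fin n) ℝ)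
    (hU : U = (((List.range s).map (fun t => BMat (jj t) (kk t) (lam t))).prod)) :
    Real.logb 2 n <
      ∑ i, x i * Real.logb 2 (1 / Matrix.vecMul (fun _ : Fin n => (1 : ℝ) / n) U i) :=
  stmt16_general x y hx0 hx1 hy0 hy1 hxs hne s z jj kk lam hchain U hU
end
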